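/- Let Y be a log terminal variety, {𝔞_r}_{r≥r₀} a graded family of ideal sheaves, 𝔟 a nonzero coherent ideal, c > 0 and a ∈ ℝ. If there exists a sequence a_r → a such that (Y, 𝔞_r^{·(c/r)}·𝔟^{·a_r}) is sub log canonical for all sufficiently divisible r ≫ 0, then the pair (Y, 𝔞_•^{·c}·𝔟^{·a}) is sub log canonical. -/
import Mathlib


open Filter

/-- Lemma 2.5(1), abstracted over the set `ι` of prime divisors `E` over a log
terminal variety `Y`: `A E = ord_E(K_Ỹ − φ*K_Y)` is the discrepancy,
`ordb E = ord_E 𝔟 ≥ 0` for the nonzero ideal `𝔟`, and `orda E r = ord_E 𝔞_r`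
for a graded family `{𝔞_r}_{r ≥ r₀}` (so `ord` is subadditive in `r`).
If there is a sequence `a_r → a` such that `(Y, 𝔞_r^{·(c/r)}·𝔟^{·a_r})` is sub
log canonical for all sufficiently divisible `r ≫ 0`, then
`(Y, 𝔞_•^{·c}·𝔟^{·a})` is sub log canonical, i.e.
`A E − liminf_r (c·ord_E 𝔞_r)/r − a·ord_E 𝔟 ≥ −1` for all `E`. -/
theorem stmt_15 (ι : Type*) (r₀ : ℕ) (hr₀ : 0 < r₀)
    (A : ι → ℝ) (ordb : ι → ℝ) (orda : ι → ℕ → ℝ)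
    (hordb : ∀ E, 0 ≤ ordb E)
    (horda : ∀ E r, r₀ ≤ r → 0 ≤ orda E r)
    (hsub : ∀ E, ∀ r r' : ℕ, r₀ ≤ r → r₀ ≤ r' →
      orda E (r + r') ≤ orda E r + orda E r')
    (c : ℝ) (hc : 0 < c) (a : ℝ) (ar : ℕ → ℝ)
    (har : Filter.Tendsto ar Filter.atTop (nhds a))
    (hslc : ∃ N M : ℕ, 0 < N ∧ ∀ r : ℕ, N ∣ r → M ≤ r →
      ∀ E, A E - (c / (r : ℝ)) * orda E r - ar r * ordb E ≥ -1) :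
    ∀ E, A E -
        Filter.liminf (fun r : ℕ => c * orda E r / (r : ℝ)) Filter.atTop -
        a * ordb E ≥ -1 := by
  obtain ⟨N, M, hN, hNM⟩ := hslc
  intro E
  have hbdd : Filter.IsBoundedUnder (· ≥ ·) Filter.atTop
      (fun r : ℕ => c * orda E r / (r : ℝ)) := by
    refine ⟨0, ?_⟩
    rw [Filter.eventually_map]
    filter_upwards [Filter.eventually_ge_atTop r₀] with r hr
    have h1 := horda E r hr
    positivity
  have hL : Filter.liminf (fun r : ℕ => c * orda E r / (r : ℝ)) Filter.atTop
      ≤ A E + 1 - a * ordb E := by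
    refine le_of_forall_pos_le_add fun ε hε => ?_
    refine Filter.liminf_le_of_frequently_le ?_ hbdd
    have hev : ∀ᶠ r : ℕ in Filter.atTop, a * ordb E - ε ≤ ar r * ordb E := by
      have h2 : Filter.Tendsto (fun r => ar r * ordb E) Filter.atTop
          (nhds (a * ordb E)) := har.mul_const _
      exact h2.eventually
        (eventually_ge_nhds (by linarith : a * ordb E - ε < a * ordb E))
    have hfreq : ∃ᶠ r : ℕ in Filter.atTop, N ∣ r ∧ M ≤ r ∧ 1 ≤ r := by
      rw [Filter.frequently_atTop]
      intro b
      refine ⟨N * (b + M + 1), ?_, ⟨Dvd.intro _ rfl, ?_, ?_⟩⟩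
      · calc b ≤ b + M + 1 := by omega
          _ ≤ N * (b + M + 1) := Nat.le_mul_of_pos_left _ hN
      · calc M ≤ b + M + 1 := by omega
          _ ≤ N * (b + M + 1) := Nat.le_mul_of_pos_left _ hN
      · calc 1 ≤ b + M + 1 := by omega
          _ ≤ N * (b + M + 1) := Nat.le_mul_of_pos_left _ hN
    refine (hfreq.and_eventually hev).mono ?_
    rintro r ⟨⟨hdvd, hM, hr1⟩, hεr⟩
    have h := hNM r hdvd hM E
    rw [div_mul_eq_mul_div] at h
    linarith
  linarith
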